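/- Let k ↦ P(k) be a smooth family of orthogonal projectors on ℂ^N and Ũ(t,k) := exp(iπt P(k)). Then Tr{(Ũ⁻¹dŨ)³} = 6iπ (cos(πt) - 1) dt ∧ Tr{P (dP)²}, as an identity of 3-forms on [0,1] × ℝ². -/

import Mathlib

open Matrix Complex

open Matrix Complex
attribute [local instance] Matrix.linftyOpNormedRing Matrix.linftyOpNormedAlgebra
set_option maxHeartbeats 1000000

lemma exp_smul_idem {N : ℕ} (a : ℂ) (P : Matrix (Fin N) (Fin N) ℂ) (hP : P * P = P) :
    NormedSpace.exp (a • P) = 1 + (Complex.exp a - 1) • P := by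
  have hpow : ∀ n : ℕ, (a • P) ^ (n + 1) = a ^ (n + 1) • P := by
    intro n
    induction n with
    | zero => simp
    | succ m ih =>
        rw [pow_succ, ih, smul_mul_smul_comm, hP, ← pow_succ]
  simp only [NormedSpace.exp_eq_tsum ℂ]
  erw [Summable.tsum_eq_zero_add (NormedSpace.expSeries_summable' (𝕂 := ℂ) (a • P))]
  simp only [hpow]
  have hsc : ∀ n : ℕ, (Nat.factorial (n + 1) : ℂ)⁻¹ • (a ^ (n+1) • P) = (a ^ (n+1) / (Nat.factorial (n+1))) • P := by
    intro n; rw [smul_smul]; ring_nf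
  simp only [hsc]
  rw [Summable.tsum_smul_const]
  · have : ∑' n : ℕ, a ^ (n+1) / ((Nat.factorial (n+1)) : ℂ) = Complex.exp a - 1 := by
      have h := Complex.exp_eq_exp_ℂ ▸ (NormedSpace.exp_eq_tsum_div (𝔸 := ℂ))
      have hsum : Summable (fun n : ℕ => a ^ n / (Nat.factorial n : ℂ)) := by
        have := NormedSpace.expSeries_summable' (𝕂 := ℂ) (a : ℂ)
        simpa [smul_eq_mul, div_eq_inv_mul] using this
      have h0 : Complex.exp a = ∑' n : ℕ, a ^ n / (Nat.factorial n : ℂ) := by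
        rw [Complex.exp_eq_exp_ℂ, NormedSpace.exp_eq_tsum_div]
      rw [Summable.tsum_eq_zero_add hsum] at h0
      simp at h0
      linear_combination -h0
    rw [this]; simp
  · have hsum : Summable (fun n : ℕ => a ^ n / (Nat.factorial n : ℂ)) := by
      have := NormedSpace.expSeries_summable' (𝕂 := ℂ) (a : ℂ)
      simpa [smul_eq_mul, div_eq_inv_mul] using this
    exact (summable_nat_add_iff 1).2 hsum |>.congr (by intro n; simp)
open Matrix Complex

lemma sum_perm_fin3 {N : ℕ} (M : Fin 3 → Matrix (Fin N) (Fin N) ℂ) :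
    (∑ σ : Equiv.Perm (Fin 3), ((Equiv.Perm.sign σ : ℤ) : ℂ) *
        Matrix.trace (M (σ 0) * M (σ 1) * M (σ 2)))
    = 3 * (Matrix.trace (M 0 * M 1 * M 2) - Matrix.trace (M 0 * M 2 * M 1)) := by
  have huniv : (Finset.univ : Finset (Equiv.Perm (Fin 3))) =
      {1, Equiv.swap 0 1, Equiv.swap 0 2, Equiv.swap 1 2,
        Equiv.swap 0 1 * Equiv.swap 1 2, Equiv.swap 1 2 * Equiv.swap 0 1} := by decide
  rw [huniv, Finset.sum_insert (by decide), Finset.sum_insert (by decide),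
    Finset.sum_insert (by decide), Finset.sum_insert (by decide),
    Finset.sum_insert (by decide), Finset.sum_singleton]
  have s1 : Equiv.Perm.sign (1 : Equiv.Perm (Fin 3)) = 1 := by decide
  have s2 : Equiv.Perm.sign (Equiv.swap (0:Fin 3) 1) = -1 := by decide
  have s3 : Equiv.Perm.sign (Equiv.swap (0:Fin 3) 2) = -1 := by decide
  have s4 : Equiv.Perm.sign (Equiv.swap (1:Fin 3) 2) = -1 := by decide
  have s5 : Equiv.Perm.sign (Equiv.swap (0:Fin 3) 1 * Equiv.swap 1 2 : Equiv.Perm (Fin 3)) = 1 := by decide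
  have s6 : Equiv.Perm.sign (Equiv.swap (1:Fin 3) 2 * Equiv.swap 0 1 : Equiv.Perm (Fin 3)) = 1 := by decide
  rw [s1, s2, s3, s4, s5, s6]
  have a1 : (1 : Equiv.Perm (Fin 3)) 0 = 0 ∧ (1 : Equiv.Perm (Fin 3)) 1 = 1 ∧
      (1 : Equiv.Perm (Fin 3)) 2 = 2 := by decide
  have a2 : (Equiv.swap (0:Fin 3) 1) 0 = 1 ∧ (Equiv.swap (0:Fin 3) 1) 1 = 0 ∧
      (Equiv.swap (0:Fin 3) 1) 2 = 2 := by decide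
  have a3 : (Equiv.swap (0:Fin 3) 2) 0 = 2 ∧ (Equiv.swap (0:Fin 3) 2) 1 = 1 ∧
      (Equiv.swap (0:Fin 3) 2) 2 = 0 := by decide
  have a4 : (Equiv.swap (1:Fin 3) 2) 0 = 0 ∧ (Equiv.swap (1:Fin 3) 2) 1 = 2 ∧
      (Equiv.swap (1:Fin 3) 2) 2 = 1 := by decide
  have a5 : (Equiv.swap (0:Fin 3) 1 * Equiv.swap 1 2 : Equiv.Perm (Fin 3)) 0 = 1 ∧
      (Equiv.swap (0:Fin 3) 1 * Equiv.swap 1 2 : Equiv.Perm (Fin 3)) 1 = 2 ∧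
      (Equiv.swap (0:Fin 3) 1 * Equiv.swap 1 2 : Equiv.Perm (Fin 3)) 2 = 0 := by decide
  have a6 : (Equiv.swap (1:Fin 3) 2 * Equiv.swap 0 1 : Equiv.Perm (Fin 3)) 0 = 2 ∧
      (Equiv.swap (1:Fin 3) 2 * Equiv.swap 0 1 : Equiv.Perm (Fin 3)) 1 = 0 ∧
      (Equiv.swap (1:Fin 3) 2 * Equiv.swap 0 1 : Equiv.Perm (Fin 3)) 2 = 1 := by decide
  rw [a1.1, a1.2.1, a1.2.2, a2.1, a2.2.1, a2.2.2, a3.1, a3.2.1, a3.2.2,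
    a4.1, a4.2.1, a4.2.2, a5.1, a5.2.1, a5.2.2, a6.1, a6.2.1, a6.2.2]
  have c1 : Matrix.trace (M 1 * M 2 * M 0) = Matrix.trace (M 0 * M 1 * M 2) :=
    Matrix.trace_mul_cycle (M 1) (M 2) (M 0)
  have c2 : Matrix.trace (M 2 * M 0 * M 1) = Matrix.trace (M 0 * M 1 * M 2) :=
    (Matrix.trace_mul_cycle (M 0) (M 1) (M 2)).symm
  have c3 : Matrix.trace (M 2 * M 1 * M 0) = Matrix.trace (M 0 * M 2 * M 1) :=
    Matrix.trace_mul_cycle (M 2) (M 1) (M 0)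
  have c4 : Matrix.trace (M 1 * M 0 * M 2) = Matrix.trace (M 0 * M 2 * M 1) :=
    (Matrix.trace_mul_cycle (M 0) (M 2) (M 1)).symm
  rw [c1, c2, c3, c4]
  push_cast
  ring
open Matrix Complex

lemma trace_triple {N : ℕ} (P D1 D2 : Matrix (Fin N) (Fin N) ℂ) (hP : P*P=P)
    (h1 : P*D1*P = 0) (a c e : ℂ) :
    Matrix.trace ((a•P) * (c•D1 + e•(P*D1)) * (c•D2 + e•(P*D2)))
      = (a*(c^2+c*e)) * Matrix.trace (P*(D1*D2)) := by
  have k1 : P*(P*D1) = P*D1 := by rw [← mul_assoc, hP]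
  have k2 : (P*D1)*(P*D2) = 0 := by rw [← mul_assoc, h1, zero_mul]
  simp only [Matrix.mul_add, Matrix.add_mul, Matrix.smul_mul, Matrix.mul_smul, smul_smul,
    k1, k2, smul_zero, trace_add, trace_smul, trace_zero, smul_eq_mul]
  rw [mul_assoc P D1 D2]
  ring

/-- For a smooth family `k ↦ P(k)` of orthogonal projectors on `ℂ^N` and
`Ũ(t,k) := exp(iπt P(k))`, one has `Tr{(Ũ⁻¹dŨ)³} = 6iπ(cos(πt) - 1) dt ∧ Tr{P (dP)²}`
as 3-forms on `[0,1] × ℝ²`; componentwise, the fully antisymmetrized trace of the triple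
product of the components of `Ũ⁻¹dŨ` equals `6iπ(cos(πt)-1) Tr{P [∂₁P, ∂₂P]}`. -/
theorem trace_cube_maurer_cartan_eq_berry_curvature
    (N : ℕ) (P : ℝ → ℝ → Matrix (Fin N) (Fin N) ℂ)
    (hsmooth : ∀ i j, ContDiff ℝ (⊤ : ℕ∞) fun k : ℝ × ℝ => P k.1 k.2 i j)
    (hproj : ∀ k₁ k₂, P k₁ k₂ * P k₁ k₂ = P k₁ k₂)
    (hherm : ∀ k₁ k₂, (P k₁ k₂)ᴴ = P k₁ k₂)
    (U : ℝ → ℝ → ℝ → Matrix (Fin N) (Fin N) ℂ)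
    (hU : ∀ t k₁ k₂, U t k₁ k₂ = NormedSpace.exp ((Real.pi * I * t) • P k₁ k₂))
    -- components of the matrix 1-form `Ũ⁻¹ dŨ` in the coordinates (t, k₁, k₂):
    (A : ℝ → ℝ → ℝ → Fin 3 → Matrix (Fin N) (Fin N) ℂ)
    (hA0 : ∀ t k₁ k₂ i j, A t k₁ k₂ 0 i j
      = ((U t k₁ k₂)⁻¹ * Matrix.of (fun a b => deriv (fun s => U s k₁ k₂ a b) t)) i j)
    (hA1 : ∀ t k₁ k₂ i j, A t k₁ k₂ 1 i j
      = ((U t k₁ k₂)⁻¹ * Matrix.of (fun a b => deriv (fun s => U t s k₂ a b) k₁)) i j)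
    (hA2 : ∀ t k₁ k₂ i j, A t k₁ k₂ 2 i j
      = ((U t k₁ k₂)⁻¹ * Matrix.of (fun a b => deriv (fun s => U t k₁ s a b) k₂)) i j)
    (D1P D2P : ℝ → ℝ → Matrix (Fin N) (Fin N) ℂ)
    (hD1P : ∀ k₁ k₂ i j, D1P k₁ k₂ i j = deriv (fun s => P s k₂ i j) k₁)
    (hD2P : ∀ k₁ k₂ i j, D2P k₁ k₂ i j = deriv (fun s => P k₁ s i j) k₂) :
    ∀ t k₁ k₂,
      (∑ σ : Equiv.Perm (Fin 3), ((Equiv.Perm.sign σ : ℤ) : ℂ) *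
          Matrix.trace (A t k₁ k₂ (σ 0) * A t k₁ k₂ (σ 1) * A t k₁ k₂ (σ 2)))
      = 6 * I * Real.pi * (Real.cos (Real.pi * t) - 1) *
          Matrix.trace (P k₁ k₂ *
            (D1P k₁ k₂ * D2P k₁ k₂ - D2P k₁ k₂ * D1P k₁ k₂)) := by
  intro t k₁ k₂
  -- abbreviations
  set E : ℂ := Complex.exp ((Real.pi : ℂ) * I * t) with hE
  set F : ℂ := Complex.exp (-((Real.pi : ℂ) * I * t)) with hF
  have hEF : E * F = 1 := by
    rw [hE, hF, ← Complex.exp_add, add_neg_cancel, Complex.exp_zero]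
  -- closed form of U
  have hUe : ∀ s : ℝ, U s k₁ k₂
      = 1 + (Complex.exp ((Real.pi : ℂ) * I * s) - 1) • P k₁ k₂ := fun s => by
    rw [hU, exp_smul_idem _ _ (hproj k₁ k₂)]
  have hUe1 : ∀ s : ℝ, U t s k₂ = 1 + (E - 1) • P s k₂ := fun s => by
    rw [hU, exp_smul_idem _ _ (hproj s k₂), hE]
  have hUe2 : ∀ s : ℝ, U t k₁ s = 1 + (E - 1) • P k₁ s := fun s => by
    rw [hU, exp_smul_idem _ _ (hproj k₁ s), hE]
  -- inverse of U
  have hUinv : (U t k₁ k₂)⁻¹ = 1 + (F - 1) • P k₁ k₂ := by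
    apply Matrix.inv_eq_right_inv
    rw [hUe t]
    have expand : (1 + (E - 1) • P k₁ k₂) * (1 + (F - 1) • P k₁ k₂)
        = 1 + ((E - 1) + (F - 1) + (E - 1) * (F - 1)) • P k₁ k₂ := by
      simp only [Matrix.mul_add, Matrix.add_mul, Matrix.one_mul, Matrix.mul_one,
        Matrix.smul_mul, Matrix.mul_smul, smul_smul, hproj, add_smul]
      module
    rw [expand, show (E - 1) + (F - 1) + (E - 1) * (F - 1) = 0 from by
      linear_combination hEF]
    simp
  -- derivative of exp factor
  have hde : HasDerivAt (fun s : ℝ => Complex.exp ((Real.pi : ℂ) * I * s))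
      ((Real.pi : ℂ) * I * E) t := by
    have hlin : HasDerivAt (fun s : ℝ => ((Real.pi : ℂ) * I * s)) ((Real.pi : ℂ) * I) t := by
      simpa using (Complex.ofRealCLM.hasDerivAt (x := t)).const_mul ((Real.pi : ℂ) * I)
    simpa [hE, mul_comm] using hlin.cexp
  -- differentiability of entries of P
  have hPdiff1 : ∀ (k₂' : ℝ) (i j : Fin N), Differentiable ℝ (fun s : ℝ => P s k₂' i j) :=
    fun k₂' i j => ((hsmooth i j).differentiable (by simp)).comp
      (differentiable_id.prodMk (differentiable_const _))
  have hPdiff2 : ∀ (k₁' : ℝ) (i j : Fin N), Differentiable ℝ (fun s : ℝ => P k₁' s i j) :=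
    fun k₁' i j => ((hsmooth i j).differentiable (by simp)).comp
      ((differentiable_const _).prodMk differentiable_id)
  have hP1 : ∀ i j, HasDerivAt (fun s => P s k₂ i j) (D1P k₁ k₂ i j) k₁ := by
    intro i j
    have := (hPdiff1 k₂ i j k₁).hasDerivAt
    rwa [← hD1P] at this
  have hP2 : ∀ i j, HasDerivAt (fun s => P k₁ s i j) (D2P k₁ k₂ i j) k₂ := by
    intro i j
    have := (hPdiff2 k₁ i j k₂).hasDerivAt
    rwa [← hD2P] at this
  -- component matrices
  have hA0' : A t k₁ k₂ 0 = ((Real.pi : ℂ) * I) • P k₁ k₂ := by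
    have hof : Matrix.of (fun a b => deriv (fun s => U s k₁ k₂ a b) t)
        = ((Real.pi : ℂ) * I * E) • P k₁ k₂ := by
      ext a b
      simp only [Matrix.of_apply, hUe, Matrix.add_apply, Matrix.smul_apply, smul_eq_mul]
      rw [(((hde.sub_const 1).mul_const (P k₁ k₂ a b)).const_add _).deriv]
    have hAeq : A t k₁ k₂ 0
        = (U t k₁ k₂)⁻¹ * Matrix.of (fun a b => deriv (fun s => U s k₁ k₂ a b) t) := by
      ext i j; exact hA0 t k₁ k₂ i j
    rw [hAeq, hof, hUinv]
    simp only [Matrix.add_mul, Matrix.one_mul, Matrix.smul_mul, Matrix.mul_smul,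
      smul_smul, hproj]
    rw [smul_add, smul_smul, ← add_smul]
    congr 1
    linear_combination (Real.pi : ℂ) * I * hEF
  have hA1' : A t k₁ k₂ 1 = (E - 1) • D1P k₁ k₂
      + ((F - 1) * (E - 1)) • (P k₁ k₂ * D1P k₁ k₂) := by
    have hof : Matrix.of (fun a b => deriv (fun s => U t s k₂ a b) k₁)
        = (E - 1) • D1P k₁ k₂ := by
      ext a b
      simp only [Matrix.of_apply, hUe1, Matrix.add_apply, Matrix.smul_apply, smul_eq_mul]
      rw [((((hP1 a b).const_mul (E - 1))).const_add _).deriv]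
    have hAeq : A t k₁ k₂ 1
        = (U t k₁ k₂)⁻¹ * Matrix.of (fun a b => deriv (fun s => U t s k₂ a b) k₁) := by
      ext i j; exact hA1 t k₁ k₂ i j
    rw [hAeq, hof, hUinv]
    simp only [Matrix.add_mul, Matrix.one_mul, Matrix.smul_mul, Matrix.mul_smul, smul_smul, hproj]
    rw [smul_add, smul_smul, mul_comm (E - 1) (F - 1)]
  have hA2' : A t k₁ k₂ 2 = (E - 1) • D2P k₁ k₂
      + ((F - 1) * (E - 1)) • (P k₁ k₂ * D2P k₁ k₂) := by
    have hof : Matrix.of (fun a b => deriv (fun s => U t k₁ s a b) k₂)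
        = (E - 1) • D2P k₁ k₂ := by
      ext a b
      simp only [Matrix.of_apply, hUe2, Matrix.add_apply, Matrix.smul_apply, smul_eq_mul]
      rw [((((hP2 a b).const_mul (E - 1))).const_add _).deriv]
    have hAeq : A t k₁ k₂ 2
        = (U t k₁ k₂)⁻¹ * Matrix.of (fun a b => deriv (fun s => U t k₁ s a b) k₂) := by
      ext i j; exact hA2 t k₁ k₂ i j
    rw [hAeq, hof, hUinv]
    simp only [Matrix.add_mul, Matrix.one_mul, Matrix.smul_mul, Matrix.mul_smul, smul_smul, hproj]
    rw [smul_add, smul_smul, mul_comm (E - 1) (F - 1)]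
  -- Leibniz rule and the key projector identity
  have hLeib : ∀ (D : Matrix (Fin N) (Fin N) ℂ)
      (hD : D = D * P k₁ k₂ + P k₁ k₂ * D), P k₁ k₂ * D * P k₁ k₂ = 0 := by
    intro D hD
    have h2 : P k₁ k₂ * D * P k₁ k₂ = P k₁ k₂ * D * P k₁ k₂ + P k₁ k₂ * D * P k₁ k₂ := by
      calc P k₁ k₂ * D * P k₁ k₂ = P k₁ k₂ * (D * P k₁ k₂ + P k₁ k₂ * D) * P k₁ k₂ := by
            rw [← hD]
        _ = P k₁ k₂ * D * (P k₁ k₂ * P k₁ k₂) + (P k₁ k₂ * P k₁ k₂) * D * P k₁ k₂ := by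
            noncomm_ring
        _ = P k₁ k₂ * D * P k₁ k₂ + P k₁ k₂ * D * P k₁ k₂ := by rw [hproj]
    have h3 : P k₁ k₂ * D * P k₁ k₂ + (0 : Matrix (Fin N) (Fin N) ℂ)
        = P k₁ k₂ * D * P k₁ k₂ + P k₁ k₂ * D * P k₁ k₂ := by rw [add_zero]; exact h2
    exact (add_left_cancel h3).symm
  have hLeib1 : D1P k₁ k₂ = D1P k₁ k₂ * P k₁ k₂ + P k₁ k₂ * D1P k₁ k₂ := by
    ext i j
    have hfun : (fun s => P s k₂ i j) = fun s => ∑ l, P s k₂ i l * P s k₂ l j := by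
      funext s
      rw [show P s k₂ i j = (P s k₂ * P s k₂) i j from by rw [hproj], Matrix.mul_apply]
    have hsum : HasDerivAt (fun s => ∑ l, P s k₂ i l * P s k₂ l j)
        (∑ l, (D1P k₁ k₂ i l * P k₁ k₂ l j + P k₁ k₂ i l * D1P k₁ k₂ l j)) k₁ :=
      HasDerivAt.fun_sum fun l _ => (hP1 i l).mul (hP1 l j)
    rw [hD1P, hfun, hsum.deriv, Matrix.add_apply, Matrix.mul_apply, Matrix.mul_apply,
      Finset.sum_add_distrib]
  have hLeib2 : D2P k₁ k₂ = D2P k₁ k₂ * P k₁ k₂ + P k₁ k₂ * D2P k₁ k₂ := by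
    ext i j
    have hfun : (fun s => P k₁ s i j) = fun s => ∑ l, P k₁ s i l * P k₁ s l j := by
      funext s
      rw [show P k₁ s i j = (P k₁ s * P k₁ s) i j from by rw [hproj], Matrix.mul_apply]
    have hsum : HasDerivAt (fun s => ∑ l, P k₁ s i l * P k₁ s l j)
        (∑ l, (D2P k₁ k₂ i l * P k₁ k₂ l j + P k₁ k₂ i l * D2P k₁ k₂ l j)) k₂ :=
      HasDerivAt.fun_sum fun l _ => (hP2 i l).mul (hP2 l j)
    rw [hD2P, hfun, hsum.deriv, Matrix.add_apply, Matrix.mul_apply, Matrix.mul_apply,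
      Finset.sum_add_distrib]
  have hz1 : P k₁ k₂ * D1P k₁ k₂ * P k₁ k₂ = 0 := hLeib _ hLeib1
  have hz2 : P k₁ k₂ * D2P k₁ k₂ * P k₁ k₂ = 0 := hLeib _ hLeib2
  -- assemble
  rw [sum_perm_fin3, hA0', hA1', hA2',
    trace_triple (P k₁ k₂) (D1P k₁ k₂) (D2P k₁ k₂) (hproj k₁ k₂) hz1
      ((Real.pi : ℂ) * I) (E - 1) ((F - 1) * (E - 1)),
    trace_triple (P k₁ k₂) (D2P k₁ k₂) (D1P k₁ k₂) (hproj k₁ k₂) hz2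
      ((Real.pi : ℂ) * I) (E - 1) ((F - 1) * (E - 1)),
    Matrix.mul_sub, trace_sub]
  have hsum : E + F = 2 * (Real.cos (Real.pi * t) : ℂ) := by
    have h1 : E = Complex.cos ((Real.pi : ℂ) * t) + Complex.sin ((Real.pi : ℂ) * t) * I := by
      rw [hE, show ((Real.pi : ℂ) * I * t) = ((Real.pi : ℂ) * t) * I from by ring,
        Complex.exp_mul_I]
    have h2 : F = Complex.cos ((Real.pi : ℂ) * t) - Complex.sin ((Real.pi : ℂ) * t) * I := by
      rw [hF, show (-((Real.pi : ℂ) * I * t)) = (-((Real.pi : ℂ) * t)) * I from by ring,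
        Complex.exp_mul_I, Complex.cos_neg, Complex.sin_neg]
      ring
    rw [h1, h2, Complex.ofReal_cos, Complex.ofReal_mul]
    ring
  have hs : 3 * ((Real.pi : ℂ) * I * ((E - 1) ^ 2 + (E - 1) * ((F - 1) * (E - 1))))
      = 6 * I * (Real.pi : ℂ) * ((Real.cos (Real.pi * t) : ℂ) - 1) := by
    linear_combination (3 * (Real.pi : ℂ) * I * (E - 2)) * hEF + (3 * (Real.pi : ℂ) * I) * hsum
  linear_combination (Matrix.trace (P k₁ k₂ * (D1P k₁ k₂ * D2P k₁ k₂))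
    - Matrix.trace (P k₁ k₂ * (D2P k₁ k₂ * D1P k₁ k₂))) * hs
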